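/- Pansu derivative of the top homogeneous coordinate function of L₄: let p = (a₁, a₂, a₃, 1) ∈ L₄ and let q = (q₁, q₂, q₃, q₄) ∈ L₄. Writing w(·) for the fourth coordinate, the one-sided limit lim_{t→0⁺} ( |w(p·δ_t q)|^{1/3} − 1 )/t exists and equals (1/3)·[ (−(1/2)a₃ − (1/12)a₁a₂)·q₁ + (1/12)a₁²·q₂ ]; in particular it is a linear function of the first-layer coordinates q₁, q₂ only. -/

import Mathlib

open Filter Real

noncomputable section

/-- The filiform group `L₄` as `ℝ⁴`. -/
abbrev L4 := ℝ × ℝ × ℝ × ℝ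

/-- The Baker–Campbell–Hausdorff product on `L₄`. -/
def L4mul (p q : L4) : L4 :=
  (p.1 + q.1, p.2.1 + q.2.1,
    p.2.2.1 + q.2.2.1 + (1 / 2) * (p.1 * q.2.1 - p.2.1 * q.1),
    p.2.2.2 + q.2.2.2 + (1 / 2) * (p.1 * q.2.2.1 - p.2.2.1 * q.1)
      + (1 / 12) * (p.1 - q.1) * (p.1 * q.2.1 - p.2.1 * q.1))

/-- The dilations `δ_t(x,y,z,w) = (tx, ty, t²z, t³w)` of `L₄`. -/
def L4dil (t : ℝ) (p : L4) : L4 :=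
  (t * p.1, t * p.2.1, t ^ 2 * p.2.2.1, t ^ 3 * p.2.2.2)

/-!
Along the dilation curve `t ↦ p·δ_t q` the top coordinate is a cubic polynomial in `t` with
constant term `w(p)`, so with `w(p) = 1` the difference quotient of `|w|^{1/3}` at `0⁺` is the
derivative of `x ↦ x^{1/3}` at `1`, namely `1/3`, times the linear coefficient of that cubic.
-/

open Topology

theorem L4mul_dil_top (p q : L4) (t : ℝ) :
    (L4mul p (L4dil t q)).2.2.2 =
      p.2.2.2
        + ((-(1 / 2) * p.2.2.1 - (1 / 12) * p.1 * p.2.1) * q.1 + (1 / 12) * p.1 ^ 2 * q.2.1) * t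
        + ((1 / 2) * p.1 * q.2.2.1 + (1 / 12) * (p.2.1 * q.1 ^ 2 - p.1 * q.1 * q.2.1)) * t ^ 2
        + q.2.2.2 * t ^ 3 := by
  simp only [L4mul, L4dil]
  ring

theorem hasDerivAt_cubic_zero (a b c d : ℝ) :
    HasDerivAt (fun t : ℝ => a + b * t + c * t ^ 2 + d * t ^ 3) b 0 := by
  have h := ((((hasDerivAt_id (0 : ℝ)).const_mul b).const_add a).fun_add
    ((hasDerivAt_pow 2 (0 : ℝ)).const_mul c)).fun_add ((hasDerivAt_pow 3 (0 : ℝ)).const_mul d)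
  simpa using h

theorem hasDerivAt_L4mul_dil_top (p q : L4) :
    HasDerivAt (fun t => (L4mul p (L4dil t q)).2.2.2)
      ((-(1 / 2) * p.2.2.1 - (1 / 12) * p.1 * p.2.1) * q.1 + (1 / 12) * p.1 ^ 2 * q.2.1) 0 := by
  simp only [L4mul_dil_top]
  exact hasDerivAt_cubic_zero _ _ _ _

theorem tendsto_abs_rpow_sub_one_div_nhdsGT_zero {f : ℝ → ℝ} {c : ℝ} (hf : HasDerivAt f c 0)
    (hf0 : f 0 = 1) (r : ℝ) :
    Tendsto (fun t => (|f t| ^ r - 1) / t) (𝓝[>] 0) (𝓝 (r * c)) := by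
  have habs : HasDerivAt (fun t => |f t|) c 0 := HasFDerivAt.abs_of_pos hf (by simp [hf0])
  have h : HasDerivAt (fun t => |f t| ^ r) (c * r * |f 0| ^ (r - 1)) 0 :=
    habs.rpow_const (Or.inl (by simp [hf0]))
  simpa [hf0, div_eq_inv_mul, mul_comm c] using h.tendsto_slope_zero_right

/-- **Pansu derivative of the top homogeneous coordinate function of `L₄`:** at
`p = (a₁, a₂, a₃, 1)`, the one-sided limit of `(|w(p·δ_t q)|^{1/3} − 1)/t` as `t → 0⁺`
exists and equals `(1/3)·[(−(1/2)a₃ − (1/12)a₁a₂)·q₁ + (1/12)a₁²·q₂]`, a linear function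
of the first-layer coordinates `q₁, q₂` only. -/
theorem L4_pansu_top_coordinate (a₁ a₂ a₃ : ℝ) (q₁ q₂ q₃ q₄ : ℝ) :
    Tendsto
      (fun t : ℝ =>
        ((|(L4mul (a₁, a₂, a₃, 1) (L4dil t (q₁, q₂, q₃, q₄))).2.2.2| ^ ((1 : ℝ) / 3)) - 1) / t)
      (nhdsWithin 0 (Set.Ioi 0))
      (nhds ((1 / 3) * ((-(1 / 2) * a₃ - (1 / 12) * a₁ * a₂) * q₁ + (1 / 12) * a₁ ^ 2 * q₂))) :=
  tendsto_abs_rpow_sub_one_div_nhdsGT_zero (hasDerivAt_L4mul_dil_top _ _)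
    (by simp [L4mul, L4dil]) _
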